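/- Let Y ∼ (1/2)N(−θ*,1) + (1/2)N(θ*,1), f(θ) = E[Y·tanh(θY)], and q(θ) = f(θ)/θ. Then q is decreasing on (0,∞), and for θ > 0, q'(θ) = −E[(Y·sinh(2θY) − 2θY²)/(2θ²·cosh²(θY))] ≤ −(2θ/3)·E[Y⁴/cosh²(θY)]. -/

import Mathlib

open MeasureTheory ProbabilityTheory
open scoped ENNReal

/-- The symmetric two-component Gaussian mixture `(1/2)N(−s,1) + (1/2)N(s,1)`. -/
noncomputable def mixG (s : ℝ) : Measure ℝ :=
  (1 / 2 : ℝ≥0∞) • gaussianReal (-s) 1 + (1 / 2 : ℝ≥0∞) • gaussianReal s 1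

/-- The population EM map `f(θ) = E[Y·tanh(θY)]`, `Y ∼ mixG s`. -/
noncomputable def emMap (s θ : ℝ) : ℝ := ∫ y, y * Real.tanh (θ * y) ∂(mixG s)

/-! Differentiating under the integral gives `f'(θ) = E[Y² / cosh²(θY)]`, and since
`sinh (2x) = 2 sinh x cosh x`, the numerator of `q' = (θ f' - f) / θ²` becomes
`-(Y sinh(2θY) - 2θY²) / (2 cosh²(θY))`. Every term of the power series of `x sinh x` is
nonnegative, so `x sinh x ≥ x² + x⁴/6`; at `x = 2θY` this bounds that numerator below by
`(4/3) θ³ Y⁴`, which gives the bound on `q'`, and `q' < 0` because `Y ≠ 0` almost surely. -/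

open Real

namespace Real

theorem sq_add_pow_four_div_six_le_mul_sinh (x : ℝ) : x ^ 2 + x ^ 4 / 6 ≤ x * sinh x := by
  have hterm : ∀ n : ℕ, x * (x ^ (2 * n + 1) / ((2 * n + 1).factorial : ℝ)) =
      (x ^ (n + 1)) ^ 2 / ((2 * n + 1).factorial : ℝ) := fun n => by ring
  have hsum := (hasSum_sinh x).mul_left x
  simp only [hterm] at hsum
  have := sum_le_hasSum (Finset.range 2) (fun n _ => by positivity) hsum
  norm_num [Finset.sum_range_succ, Nat.factorial] at this
  linarith

theorem hasDerivAt_tanh (x : ℝ) : HasDerivAt tanh (1 / cosh x ^ 2) x := by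
  rw [show tanh = fun y => sinh y / cosh y from funext tanh_eq_sinh_div_cosh]
  refine ((hasDerivAt_sinh x).div (hasDerivAt_cosh x) (cosh_pos x).ne').congr_deriv ?_
  rw [← cosh_sq_sub_sinh_sq x]
  ring

@[fun_prop]
theorem continuous_tanh : Continuous tanh :=
  continuous_iff_continuousAt.2 fun x => (hasDerivAt_tanh x).continuousAt

end Real

theorem norm_pow_div_cosh_sq_le (n : ℕ) (t y : ℝ) :
    ‖y ^ n / cosh (t * y) ^ 2‖ ≤ ‖y‖ ^ n := by
  rw [norm_div, norm_pow, norm_pow, Real.norm_of_nonneg (cosh_pos _).le]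
  exact div_le_self (by positivity) (one_le_pow₀ (one_le_cosh _))

theorem sinh_two_mul_sub_div_eq {θ : ℝ} (hθ : θ ≠ 0) (y : ℝ) :
    (y * sinh (2 * θ * y) - 2 * θ * y ^ 2) / (2 * θ ^ 2 * cosh (θ * y) ^ 2) =
      y * tanh (θ * y) / θ ^ 2 - y ^ 2 / cosh (θ * y) ^ 2 / θ := by
  have hc : cosh (θ * y) ≠ 0 := (cosh_pos _).ne'
  rw [show 2 * θ * y = 2 * (θ * y) by ring, sinh_two_mul, tanh_eq_sinh_div_cosh]
  field_simp

theorem mul_pow_four_div_cosh_sq_le {θ : ℝ} (hθ : 0 < θ) (y : ℝ) :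
    2 * θ / 3 * (y ^ 4 / cosh (θ * y) ^ 2) ≤
      (y * sinh (2 * θ * y) - 2 * θ * y ^ 2) / (2 * θ ^ 2 * cosh (θ * y) ^ 2) := by
  have hc : cosh (θ * y) ≠ 0 := (cosh_pos _).ne'
  have key := sq_add_pow_four_div_six_le_mul_sinh (2 * θ * y)
  calc 2 * θ / 3 * (y ^ 4 / cosh (θ * y) ^ 2)
      = 4 / 3 * θ ^ 3 * y ^ 4 / (2 * θ ^ 2 * cosh (θ * y) ^ 2) := by
        field_simp
        ring
    _ ≤ _ := by
        gcongr
        nlinarith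

section mixG

variable (s : ℝ)

instance : IsProbabilityMeasure (mixG s) := by
  constructor
  simp only [mixG, Measure.add_apply, Measure.smul_apply, measure_univ, smul_eq_mul, mul_one]
  exact ENNReal.add_halves 1

theorem mixG_absolutelyContinuous : mixG s ≪ volume :=
  ((gaussianReal_absolutelyContinuous _ one_ne_zero).smul_left _).add_left
    ((gaussianReal_absolutelyContinuous _ one_ne_zero).smul_left _)

variable {s} in
theorem integrable_mixG {E : Type*} [NormedAddCommGroup E] {f : ℝ → E} (hf : ∀ m, Integrable f (gaussianReal m 1)) :
    Integrable f (mixG s) :=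
  ((hf (-s)).smul_measure (by simp)).add_measure ((hf s).smul_measure (by simp))

theorem integrable_norm_pow_mixG (n : ℕ) : Integrable (fun y : ℝ => ‖y‖ ^ n) (mixG s) :=
  integrable_mixG fun _ => (memLp_id_gaussianReal n).integrable_norm_pow'

theorem integrable_pow_div_cosh_sq (θ : ℝ) (n : ℕ) :
    Integrable (fun y : ℝ => y ^ n / cosh (θ * y) ^ 2) (mixG s) := by
  have hcont : Continuous fun y : ℝ => y ^ n / cosh (θ * y) ^ 2 :=
    (continuous_pow n).div (by fun_prop) fun _ => (pow_pos (cosh_pos _) 2).ne'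
  exact (integrable_norm_pow_mixG s n).mono' hcont.aestronglyMeasurable
    (ae_of_all _ (norm_pow_div_cosh_sq_le n θ))

theorem integrable_mul_tanh (θ : ℝ) :
    Integrable (fun y : ℝ => y * tanh (θ * y)) (mixG s) := by
  refine (integrable_norm_pow_mixG s 1).mono' (by fun_prop) (ae_of_all _ fun y => ?_)
  rw [norm_mul, pow_one]
  exact mul_le_of_le_one_right (norm_nonneg y) (abs_tanh_lt_one _).le

theorem integrable_sinh_two_mul_sub_div {θ : ℝ} (hθ : θ ≠ 0) :
    Integrable (fun y => (y * sinh (2 * θ * y) - 2 * θ * y ^ 2) /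
      (2 * θ ^ 2 * cosh (θ * y) ^ 2)) (mixG s) := by
  simp only [sinh_two_mul_sub_div_eq hθ]
  exact ((integrable_mul_tanh s θ).div_const _).sub
    ((integrable_pow_div_cosh_sq s θ 2).div_const _)

theorem integral_pow_four_div_cosh_sq_pos (θ : ℝ) :
    0 < ∫ y, y ^ 4 / cosh (θ * y) ^ 2 ∂(mixG s) := by
  rw [integral_pos_iff_support_of_nonneg (fun y => by positivity)
    (integrable_pow_div_cosh_sq s θ 4)]
  have hsupp : {(0 : ℝ)}ᶜ ⊆ Function.support fun y : ℝ => y ^ 4 / cosh (θ * y) ^ 2 :=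
    fun y (hy : y ≠ 0) => Function.mem_support.2 (by positivity)
  have hcompl : mixG s {(0 : ℝ)}ᶜ = 1 :=
    (prob_compl_eq_one_iff (measurableSet_singleton 0)).2
      (mixG_absolutelyContinuous s (measure_singleton 0))
  exact (hcompl.symm ▸ zero_lt_one).trans_le (measure_mono hsupp)

theorem hasDerivAt_emMap (θ : ℝ) :
    HasDerivAt (emMap s) (∫ y, y ^ 2 / cosh (θ * y) ^ 2 ∂(mixG s)) θ := by
  have hderiv : ∀ y t : ℝ,
      HasDerivAt (fun t => y * tanh (t * y)) (y ^ 2 / cosh (t * y) ^ 2) t := fun y t => by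
    refine (((hasDerivAt_tanh (t * y)).comp t (hasDerivAt_mul_const y)).const_mul y).congr_deriv ?_
    ring
  exact (hasDerivAt_integral_of_dominated_loc_of_deriv_le (Metric.ball_mem_nhds θ one_pos)
    (Filter.Eventually.of_forall fun t => (integrable_mul_tanh s t).aestronglyMeasurable)
    (integrable_mul_tanh s θ) (integrable_pow_div_cosh_sq s θ 2).aestronglyMeasurable
    (ae_of_all _ fun y t _ => norm_pow_div_cosh_sq_le 2 t y) (integrable_norm_pow_mixG s 2)
    (ae_of_all _ fun y t _ => hderiv y t)).2

theorem hasDerivAt_emMap_div {θ : ℝ} (hθ : θ ≠ 0) :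
    HasDerivAt (fun t => emMap s t / t)
      (-∫ y, (y * sinh (2 * θ * y) - 2 * θ * y ^ 2) / (2 * θ ^ 2 * cosh (θ * y) ^ 2)
        ∂(mixG s)) θ := by
  refine ((hasDerivAt_emMap s θ).div (hasDerivAt_id' θ) hθ).congr_deriv ?_
  rw [integral_congr_ae (ae_of_all _ (sinh_two_mul_sub_div_eq hθ)),
    integral_sub ((integrable_mul_tanh s θ).div_const _)
      ((integrable_pow_div_cosh_sq s θ 2).div_const _),
    integral_div, integral_div, emMap]
  generalize ∫ y, y ^ 2 / cosh (θ * y) ^ 2 ∂(mixG s) = A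
  field_simp
  ring

end mixG

theorem stmt_6_general (s : ℝ) :
    StrictAntiOn (fun θ : ℝ => emMap s θ / θ) (Set.Ioi 0) ∧
    ∀ θ : ℝ, 0 < θ →
      deriv (fun t : ℝ => emMap s t / t) θ =
        -∫ y, (y * Real.sinh (2 * θ * y) - 2 * θ * y ^ 2) /
            (2 * θ ^ 2 * Real.cosh (θ * y) ^ 2) ∂(mixG s) ∧
      deriv (fun t : ℝ => emMap s t / t) θ ≤
        -(2 * θ / 3) * ∫ y, y ^ 4 / Real.cosh (θ * y) ^ 2 ∂(mixG s) := by
  have hbound : ∀ θ : ℝ, 0 < θ → deriv (fun t : ℝ => emMap s t / t) θ ≤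
      -(2 * θ / 3) * ∫ y, y ^ 4 / Real.cosh (θ * y) ^ 2 ∂(mixG s) := fun θ hθ => by
    rw [(hasDerivAt_emMap_div s hθ.ne').deriv, neg_mul, neg_le_neg_iff, ← integral_const_mul]
    exact integral_mono ((integrable_pow_div_cosh_sq s θ 4).const_mul _)
      (integrable_sinh_two_mul_sub_div s hθ.ne') (mul_pow_four_div_cosh_sq_le hθ)
  refine ⟨strictAntiOn_of_deriv_neg (convex_Ioi 0) ?_ ?_,
    fun θ hθ => ⟨(hasDerivAt_emMap_div s hθ.ne').deriv, hbound θ hθ⟩⟩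
  · exact fun θ hθ => (hasDerivAt_emMap_div s (ne_of_gt hθ)).continuousAt.continuousWithinAt
  · intro θ hθ
    rw [interior_Ioi, Set.mem_Ioi] at hθ
    refine (hbound θ hθ).trans_lt (mul_neg_of_neg_of_pos ?_ ?_)
    · linarith
    · exact integral_pow_four_div_cosh_sq_pos s θ

/-- `q(θ) = f(θ)/θ` is decreasing on `(0,∞)`, with the stated formula and bound
for `q'(θ)` for `θ > 0`. -/
theorem stmt_6 (s : ℝ) (hs : 0 ≤ s) :
    StrictAntiOn (fun θ : ℝ => emMap s θ / θ) (Set.Ioi 0) ∧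
    ∀ θ : ℝ, 0 < θ →
      deriv (fun t : ℝ => emMap s t / t) θ =
        -∫ y, (y * Real.sinh (2 * θ * y) - 2 * θ * y ^ 2) /
            (2 * θ ^ 2 * Real.cosh (θ * y) ^ 2) ∂(mixG s) ∧
      deriv (fun t : ℝ => emMap s t / t) θ ≤
        -(2 * θ / 3) * ∫ y, y ^ 4 / Real.cosh (θ * y) ^ 2 ∂(mixG s) :=
  stmt_6_general s
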